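/- Let Z be a random variable taking values in [0,1] with strictly positive density f with respect to Lebesgue measure, and let a : [0,1] → ℝ be measurable with a/f integrable with respect to the law of Z. Then ∫₀¹ a(z) dz = E[a(Z)/f(Z)]. Moreover, for measurable Y₁, Y₂ with Y₂ > 0 and appropriate integrability, setting a(z) := E[Y₁|Z=z]/E[Y₂|Z=z] and b(z) := 1/(f(z)·E[Y₂|Z=z]), the identity ∫₀¹ a'(z) dz + E[b'(Z)·(Y₁ − Y₂·a'(Z))] − ∫₀¹ a(z) dz = −E[Y₂·(a'(Z) − a(Z))·(b'(Z) − b(Z))] holds for all measurable a', b' with the displayed quantities integrable. -/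

import Mathlib

open MeasureTheory Filter Topology


/-- Tower property for `X₁ Y₁ + X₂ Y₂` when only the sum is integrable. -/
lemma mix_tower {Ω : Type*} {m : MeasurableSpace Ω} [m0 : MeasurableSpace Ω] (hm : m ≤ m0)
    (μ : Measure Ω) [IsFiniteMeasure μ]
    {X₁ X₂ Y₁ Y₂ : Ω → ℝ} (hX₁ : StronglyMeasurable[m] X₁) (hX₂ : StronglyMeasurable[m] X₂)
    (hY₁ : Integrable Y₁ μ) (hY₂ : Integrable Y₂ μ)
    (hU : Integrable (fun ω => X₁ ω * Y₁ ω + X₂ ω * Y₂ ω) μ) :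
    Integrable (fun ω => X₁ ω * (μ[Y₁|m]) ω + X₂ ω * (μ[Y₂|m]) ω) μ ∧
      ∫ ω, (X₁ ω * Y₁ ω + X₂ ω * Y₂ ω) ∂μ
        = ∫ ω, (X₁ ω * (μ[Y₁|m]) ω + X₂ ω * (μ[Y₂|m]) ω) ∂μ := by
  haveI : IsFiniteMeasure (μ.trim hm) := isFiniteMeasure_trim hm
  haveI : SigmaFinite (μ.trim hm) := inferInstance
  set e₁ := μ[Y₁|m] with he₁
  set e₂ := μ[Y₂|m] with he₂
  set U : Ω → ℝ := fun ω => X₁ ω * Y₁ ω + X₂ ω * Y₂ ω with hUdef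
  set V : Ω → ℝ := fun ω => X₁ ω * e₁ ω + X₂ ω * e₂ ω with hVdef
  have hX₁m : Measurable[m] X₁ := hX₁.measurable
  have hX₂m : Measurable[m] X₂ := hX₂.measurable
  set A : ℕ → Set Ω := fun n => {ω | |X₁ ω| ≤ n ∧ |X₂ ω| ≤ n} with hA
  have hAm : ∀ n, MeasurableSet[m] (A n) := by
    intro n
    exact ((measurable_abs.comp hX₁m) measurableSet_Iic).inter ((measurable_abs.comp hX₂m) measurableSet_Iic)
  have hAmono : Monotone A := by
    intro i j hij ω hω
    exact ⟨hω.1.trans (Nat.cast_le.mpr hij), hω.2.trans (Nat.cast_le.mpr hij)⟩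
  have hmemA : ∀ ω : Ω, ∃ N : ℕ, ∀ n ≥ N, ω ∈ A n := by
    intro ω
    obtain ⟨N, hN⟩ := exists_nat_ge (max |X₁ ω| |X₂ ω|)
    refine ⟨N, fun n hn => ?_⟩
    have h' : (N : ℝ) ≤ n := Nat.cast_le.mpr hn
    exact ⟨((le_max_left _ _).trans hN).trans h', ((le_max_right _ _).trans hN).trans h'⟩
  -- basic measurability
  have hVsm : StronglyMeasurable V :=
    ((hX₁.mono hm).mul (stronglyMeasurable_condExp.mono hm)).add
      ((hX₂.mono hm).mul (stronglyMeasurable_condExp.mono hm))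
  -- key per-n facts
  have key : ∀ n : ℕ, Integrable ((A n).indicator V) μ ∧
      (∫ ω, (A n).indicator U ω ∂μ = ∫ ω, (A n).indicator V ω ∂μ) ∧
      ∫ ω, |(A n).indicator V ω| ∂μ ≤ ∫ ω, |U ω| ∂μ := by
    intro n
    set X₁n : Ω → ℝ := (A n).indicator X₁ with hX₁ndef
    set X₂n : Ω → ℝ := (A n).indicator X₂ with hX₂ndef
    have hX₁nsm : StronglyMeasurable[m] X₁n := hX₁.indicator (hAm n)
    have hX₂nsm : StronglyMeasurable[m] X₂n := hX₂.indicator (hAm n)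
    have hbd : ∀ (X : Ω → ℝ), (∀ ω ∈ A n, |X ω| ≤ n) → ∀ ω, ‖(A n).indicator X ω‖ ≤ n := by
      intro X hX ω
      by_cases h : ω ∈ A n
      · rw [Set.indicator_of_mem h]; exact hX ω h
      · rw [Set.indicator_of_notMem h]; simp
    have hbd₁ : ∀ ω, ‖X₁n ω‖ ≤ n := hbd X₁ (fun ω hω => hω.1)
    have hbd₂ : ∀ ω, ‖X₂n ω‖ ≤ n := hbd X₂ (fun ω hω => hω.2)
    have hi₁ : Integrable (fun ω => X₁n ω * Y₁ ω) μ :=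
      hY₁.bdd_mul ((hX₁nsm.mono hm).aestronglyMeasurable) (Eventually.of_forall hbd₁)
    have hi₂ : Integrable (fun ω => X₂n ω * Y₂ ω) μ :=
      hY₂.bdd_mul ((hX₂nsm.mono hm).aestronglyMeasurable) (Eventually.of_forall hbd₂)
    have hie₁ : Integrable (fun ω => X₁n ω * e₁ ω) μ :=
      integrable_condExp.bdd_mul ((hX₁nsm.mono hm).aestronglyMeasurable) (Eventually.of_forall hbd₁)
    have hie₂ : Integrable (fun ω => X₂n ω * e₂ ω) μ :=
      integrable_condExp.bdd_mul ((hX₂nsm.mono hm).aestronglyMeasurable) (Eventually.of_forall hbd₂)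
    have hc₁ : μ[(fun ω => X₁n ω * Y₁ ω)|m] =ᵐ[μ] fun ω => X₁n ω * e₁ ω :=
      condExp_mul_of_stronglyMeasurable_left hX₁nsm hi₁ hY₁
    have hc₂ : μ[(fun ω => X₂n ω * Y₂ ω)|m] =ᵐ[μ] fun ω => X₂n ω * e₂ ω :=
      condExp_mul_of_stronglyMeasurable_left hX₂nsm hi₂ hY₂
    have hindU : ∀ ω, (A n).indicator U ω = X₁n ω * Y₁ ω + X₂n ω * Y₂ ω := by
      intro ω
      by_cases h : ω ∈ A n
      · simp [hUdef, Set.indicator_of_mem h, X₁n, X₂n]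
      · simp [Set.indicator_of_notMem h, X₁n, X₂n]
    have hindV : ∀ ω, (A n).indicator V ω = X₁n ω * e₁ ω + X₂n ω * e₂ ω := by
      intro ω
      by_cases h : ω ∈ A n
      · simp [hVdef, Set.indicator_of_mem h, X₁n, X₂n]
      · simp [Set.indicator_of_notMem h, X₁n, X₂n]
    have hiV : Integrable ((A n).indicator V) μ := by
      refine (hie₁.add hie₂).congr ?_
      exact Eventually.of_forall fun ω => (hindV ω).symm
    have hiU : Integrable ((A n).indicator U) μ := by
      refine (hi₁.add hi₂).congr ?_
      exact Eventually.of_forall fun ω => (hindU ω).symm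
    have hcondind : μ[((A n).indicator U)|m] =ᵐ[μ] (A n).indicator V := by
      have h0 : ((A n).indicator U) = (fun ω => X₁n ω * Y₁ ω) + fun ω => X₂n ω * Y₂ ω :=
        funext fun ω => hindU ω
      calc μ[((A n).indicator U)|m]
          =ᵐ[μ] μ[(fun ω => X₁n ω * Y₁ ω)|m] + μ[(fun ω => X₂n ω * Y₂ ω)|m] := by
            rw [h0]; exact condExp_add hi₁ hi₂ m
        _ =ᵐ[μ] (A n).indicator V := by
            filter_upwards [hc₁, hc₂] with ω h1 h2
            simp only [Pi.add_apply, h1, h2, hindV ω]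
    refine ⟨hiV, ?_, ?_⟩
    · calc ∫ ω, (A n).indicator U ω ∂μ
          = ∫ ω, (μ[((A n).indicator U)|m]) ω ∂μ := (integral_condExp hm).symm
        _ = ∫ ω, (A n).indicator V ω ∂μ := integral_congr_ae hcondind
    · calc ∫ ω, |(A n).indicator V ω| ∂μ
          = ∫ ω, |(μ[((A n).indicator U)|m]) ω| ∂μ :=
            integral_congr_ae (hcondind.mono fun ω h => by dsimp only; rw [h])
        _ ≤ ∫ ω, |(A n).indicator U ω| ∂μ := integral_abs_condExp_le _
        _ ≤ ∫ ω, |U ω| ∂μ := by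
            refine integral_mono hiU.abs hU.abs fun ω => ?_
            by_cases h : ω ∈ A n
            · rw [Set.indicator_of_mem h]
            · rw [Set.indicator_of_notMem h]; simp [abs_nonneg]
  -- integrability of V
  have hVint : Integrable V μ := by
    refine ⟨hVsm.aestronglyMeasurable, ?_⟩
    have hmono' : Monotone fun n : ℕ => (A n).indicator fun ω => (‖V ω‖₊ : ENNReal) := by
      intro i j hij ω
      exact Set.indicator_le_indicator_of_subset (hAmono hij) (fun _ => zero_le) ω
    have hsup : (fun ω => (‖V ω‖₊ : ENNReal))
        = fun ω => ⨆ n, (A n).indicator (fun ω => (‖V ω‖₊ : ENNReal)) ω := by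
      funext ω
      obtain ⟨N, hN⟩ := hmemA ω
      refine le_antisymm ?_ (iSup_le fun n => Set.indicator_le_self _ _ ω)
      exact le_iSup_of_le N (by rw [Set.indicator_of_mem (hN N le_rfl)])
    rw [hasFiniteIntegral_iff_enorm]; simp only [enorm_eq_nnnorm]; rw [hsup,
      lintegral_iSup (fun n => ((hVsm.measurable.nnnorm.coe_nnreal_ennreal).indicator
        (hm _ (hAm n)))) hmono']
    refine lt_of_le_of_lt (iSup_le fun n => (?_ : _ ≤ ENNReal.ofReal (∫ ω, |U ω| ∂μ)))
      ENNReal.ofReal_lt_top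
    obtain ⟨hiV, _, hle⟩ := key n
    have h1 : ∫⁻ ω, (A n).indicator (fun ω => (‖V ω‖₊ : ENNReal)) ω ∂μ
        = ∫⁻ ω, (‖(A n).indicator V ω‖₊ : ENNReal) ∂μ := by
      refine lintegral_congr fun ω => ?_
      by_cases h : ω ∈ A n
      · rw [Set.indicator_of_mem h, Set.indicator_of_mem h]
      · rw [Set.indicator_of_notMem h, Set.indicator_of_notMem h]; simp
    rw [h1]; simp only [← enorm_eq_nnnorm]; rw [← ofReal_integral_norm_eq_lintegral_enorm hiV]
    apply ENNReal.ofReal_le_ofReal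
    simpa [Real.norm_eq_abs] using hle
  refine ⟨hVint, ?_⟩
  -- dominated convergence on both sides
  have htU : Tendsto (fun n => ∫ ω, (A n).indicator U ω ∂μ) atTop (𝓝 (∫ ω, U ω ∂μ)) := by
    refine tendsto_integral_of_dominated_convergence (fun ω => |U ω|)
      (fun n => hU.aestronglyMeasurable.indicator (hm _ (hAm n))) hU.abs
      (fun n => Eventually.of_forall fun ω => ?_) (Eventually.of_forall fun ω => ?_)
    · by_cases h : ω ∈ A n
      · rw [Set.indicator_of_mem h]; exact le_of_eq (Real.norm_eq_abs _)
      · rw [Set.indicator_of_notMem h]; simp [abs_nonneg]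
    · obtain ⟨N, hN⟩ := hmemA ω
      refine tendsto_atTop_of_eventually_const (i₀ := N) fun n hn => ?_
      rw [Set.indicator_of_mem (hN n hn)]
  have htV : Tendsto (fun n => ∫ ω, (A n).indicator V ω ∂μ) atTop (𝓝 (∫ ω, V ω ∂μ)) := by
    refine tendsto_integral_of_dominated_convergence (fun ω => |V ω|)
      (fun n => hVint.aestronglyMeasurable.indicator (hm _ (hAm n))) hVint.abs
      (fun n => Eventually.of_forall fun ω => ?_) (Eventually.of_forall fun ω => ?_)
    · by_cases h : ω ∈ A n
      · rw [Set.indicator_of_mem h]; exact le_of_eq (Real.norm_eq_abs _)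
      · rw [Set.indicator_of_notMem h]; simp [abs_nonneg]
    · obtain ⟨N, hN⟩ := hmemA ω
      refine tendsto_atTop_of_eventually_const (i₀ := N) fun n hn => ?_
      rw [Set.indicator_of_mem (hN n hn)]
  have heq : (fun n => ∫ ω, (A n).indicator U ω ∂μ) = fun n => ∫ ω, (A n).indicator V ω ∂μ :=
    funext fun n => (key n).2.1
  rw [heq] at htU
  exact tendsto_nhds_unique htU htV

/-- Example 5: for `Z` with positive density `f` on `[0,1]`, `∫₀¹ a(z) dz = E[a(Z)/f(Z)]`,
and the parameter `∫₀¹ a(z) dz` with `a = E[Y₁|Z]/E[Y₂|Z]`, `b = 1/(f(Z) E[Y₂|Z])`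
satisfies the mixed bias identity with `S_ab = −Y₂`. -/
theorem stmt14 {Ω : Type*} [MeasurableSpace Ω] (P : Measure Ω) [IsProbabilityMeasure P]
    (Z : Ω → ℝ) (hZ : Measurable Z) (hZ01 : ∀ ω, Z ω ∈ Set.Icc (0 : ℝ) 1)
    (f : ℝ → ℝ) (hf : Measurable f) (hfpos : ∀ z, 0 < f z)
    (hdens : ∀ g : ℝ → ℝ, Measurable g → Integrable (fun ω => g (Z ω)) P →
      ∫ ω, g (Z ω) ∂P = ∫ z in Set.Icc (0 : ℝ) 1, g z * f z)
    (Y₁ Y₂ : Ω → ℝ) (hY₁ : Integrable Y₁ P) (hY₂ : Integrable Y₂ P)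
    (hY₂pos : ∀ ω, 0 < Y₂ ω)
    (e₁ e₂ a b : Ω → ℝ)
    (he₁ : e₁ = P[Y₁|MeasurableSpace.comap Z inferInstance])
    (he₂ : e₂ = P[Y₂|MeasurableSpace.comap Z inferInstance])
    (ha : a = fun ω => e₁ ω / e₂ ω)
    (hb : b = fun ω => 1 / (f (Z ω) * e₂ ω)) :
    (∀ a₀ : ℝ → ℝ, Measurable a₀ → Integrable (fun ω => a₀ (Z ω) / f (Z ω)) P →
      ∫ z in Set.Icc (0 : ℝ) 1, a₀ z = ∫ ω, a₀ (Z ω) / f (Z ω) ∂P) ∧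
    (∀ a' b' : ℝ → ℝ, Measurable a' → Measurable b' →
      Integrable (fun ω => b' (Z ω) * (Y₁ ω - Y₂ ω * a' (Z ω))) P →
      IntegrableOn a' (Set.Icc (0 : ℝ) 1) →
      Integrable (fun ω => a ω / f (Z ω)) P →
      Integrable (fun ω => Y₂ ω * (a' (Z ω) - a ω) * (b' (Z ω) - b ω)) P →
      (∫ z in Set.Icc (0 : ℝ) 1, a' z)
          + (∫ ω, b' (Z ω) * (Y₁ ω - Y₂ ω * a' (Z ω)) ∂P)
          - ∫ ω, a ω / f (Z ω) ∂P
        = -∫ ω, Y₂ ω * (a' (Z ω) - a ω) * (b' (Z ω) - b ω) ∂P) := by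
  subst ha hb
  have part1 : ∀ a₀ : ℝ → ℝ, Measurable a₀ → Integrable (fun ω => a₀ (Z ω) / f (Z ω)) P →
      ∫ z in Set.Icc (0 : ℝ) 1, a₀ z = ∫ ω, a₀ (Z ω) / f (Z ω) ∂P := by
    intro a₀ ha₀ hint
    have h := hdens (fun z => a₀ z / f z) (ha₀.div hf) hint
    rw [h]
    refine (setIntegral_congr_fun measurableSet_Icc fun z _ => ?_).symm
    rw [div_mul_cancel₀ _ (hfpos z).ne']
  refine ⟨part1, ?_⟩
  intro a' b' ha' hb' hW hIa' hAf hG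
  have hm : MeasurableSpace.comap Z inferInstance ≤ ‹MeasurableSpace Ω› := hZ.comap_le
  haveI : IsFiniteMeasure (P.trim hm) := isFiniteMeasure_trim hm
  have hZm : Measurable[MeasurableSpace.comap Z inferInstance] Z :=
    Measurable.of_comap_le le_rfl
  have he₁M : Measurable[MeasurableSpace.comap Z inferInstance] e₁ := by
    rw [he₁]; exact stronglyMeasurable_condExp.measurable
  have he₂M : Measurable[MeasurableSpace.comap Z inferInstance] e₂ := by
    rw [he₂]; exact stronglyMeasurable_condExp.measurable
  -- e₂ is a.e. positive
  have he₂pos : ∀ᵐ ω ∂P, 0 < e₂ ω := by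
    have hs : MeasurableSet[MeasurableSpace.comap Z inferInstance] {ω | e₂ ω ≤ 0} :=
      he₂M measurableSet_Iic
    have h1 : ∫ ω in {ω | e₂ ω ≤ 0}, e₂ ω ∂P = ∫ ω in {ω | e₂ ω ≤ 0}, Y₂ ω ∂P := by
      have h0 := setIntegral_condExp hm hY₂ hs
      rw [← he₂] at h0
      exact h0
    have hnull : P {ω | e₂ ω ≤ 0} = 0 := by
      by_contra hP
      have hposint : 0 < ∫ ω in {ω | e₂ ω ≤ 0}, Y₂ ω ∂P := by
        rw [setIntegral_pos_iff_support_of_nonneg_ae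
          (Eventually.of_forall fun ω => (hY₂pos ω).le) hY₂.integrableOn]
        have hsupp : Function.support Y₂ = Set.univ :=
          Set.eq_univ_of_forall fun ω => (hY₂pos ω).ne'
        rw [hsupp, Set.univ_inter]
        exact lt_of_le_of_ne zero_le (Ne.symm hP)
      have hnonpos : ∫ ω in {ω | e₂ ω ≤ 0}, e₂ ω ∂P ≤ 0 :=
        setIntegral_nonpos (hm _ hs) fun ω hω => hω
      rw [h1] at hnonpos
      linarith
    refine ae_iff.mpr ?_
    simpa [not_lt] using hnull
  -- apply the tower lemma
  have hU' : Integrable (fun ω => (fun ω => b' (Z ω)) ω * Y₁ ω +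
      (fun ω => -(b' (Z ω) * (e₁ ω / e₂ ω) +
        (1 / (f (Z ω) * e₂ ω)) * (a' (Z ω) - e₁ ω / e₂ ω))) ω * Y₂ ω) P := by
    refine (hW.add hG).congr (Eventually.of_forall fun ω => ?_)
    simp only [Pi.add_apply]
    ring
  obtain ⟨hVint, hinteq⟩ := mix_tower hm P
    (X₁ := fun ω => b' (Z ω))
    (X₂ := fun ω => -(b' (Z ω) * (e₁ ω / e₂ ω) +
        (1 / (f (Z ω) * e₂ ω)) * (a' (Z ω) - e₁ ω / e₂ ω)))
    ((hb'.comp hZm).stronglyMeasurable)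
    ((((hb'.comp hZm).mul (he₁M.div he₂M)).add
      ((measurable_const.div ((hf.comp hZm).mul he₂M)).mul
        ((ha'.comp hZm).sub (he₁M.div he₂M)))).neg.stronglyMeasurable)
    hY₁ hY₂ hU'
  rw [← he₁, ← he₂] at hVint hinteq
  -- identify the conditional-expectation side
  have haeV : (fun ω => (fun ω => b' (Z ω)) ω * e₁ ω +
      (fun ω => -(b' (Z ω) * (e₁ ω / e₂ ω) +
        (1 / (f (Z ω) * e₂ ω)) * (a' (Z ω) - e₁ ω / e₂ ω))) ω * e₂ ω)
      =ᵐ[P] fun ω => -((a' (Z ω) - e₁ ω / e₂ ω) / f (Z ω)) := by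
    filter_upwards [he₂pos] with ω hω
    have hfω : f (Z ω) ≠ 0 := (hfpos (Z ω)).ne'
    have hω' : e₂ ω ≠ 0 := hω.ne'
    field_simp
    ring
  have hd : Integrable (fun ω => -((a' (Z ω) - e₁ ω / e₂ ω) / f (Z ω))) P :=
    hVint.congr haeV
  have hd' : Integrable (fun ω => (a' (Z ω) - e₁ ω / e₂ ω) / f (Z ω)) P := by
    refine hd.neg.congr (Eventually.of_forall fun ω => ?_)
    simp [Pi.neg_apply]
  have ha'f : Integrable (fun ω => a' (Z ω) / f (Z ω)) P := by
    refine (hd'.add hAf).congr (Eventually.of_forall fun ω => ?_)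
    simp only [Pi.add_apply, ← add_div, sub_add_cancel]
  have hIcc : ∫ z in Set.Icc (0:ℝ) 1, a' z = ∫ ω, a' (Z ω) / f (Z ω) ∂P :=
    part1 a' ha' ha'f
  have hsum : ∫ ω, ((fun ω => b' (Z ω)) ω * Y₁ ω +
      (fun ω => -(b' (Z ω) * (e₁ ω / e₂ ω) +
        (1 / (f (Z ω) * e₂ ω)) * (a' (Z ω) - e₁ ω / e₂ ω))) ω * Y₂ ω) ∂P
      = (∫ ω, b' (Z ω) * (Y₁ ω - Y₂ ω * a' (Z ω)) ∂P)
        + ∫ ω, Y₂ ω * (a' (Z ω) - e₁ ω / e₂ ω) * (b' (Z ω) - 1 / (f (Z ω) * e₂ ω)) ∂P := by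
    rw [← integral_add hW hG]
    refine integral_congr_ae (Eventually.of_forall fun ω => ?_)
    dsimp only
    ring
  have hVval : ∫ ω, ((fun ω => b' (Z ω)) ω * e₁ ω +
      (fun ω => -(b' (Z ω) * (e₁ ω / e₂ ω) +
        (1 / (f (Z ω) * e₂ ω)) * (a' (Z ω) - e₁ ω / e₂ ω))) ω * e₂ ω) ∂P
      = -∫ ω, (a' (Z ω) - e₁ ω / e₂ ω) / f (Z ω) ∂P := by
    rw [integral_congr_ae haeV, integral_neg]
  have hsub : ∫ ω, (a' (Z ω) - e₁ ω / e₂ ω) / f (Z ω) ∂P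
      = (∫ ω, a' (Z ω) / f (Z ω) ∂P) - ∫ ω, e₁ ω / e₂ ω / f (Z ω) ∂P := by
    rw [← integral_sub ha'f hAf]
    exact integral_congr_ae (Eventually.of_forall fun ω => sub_div _ _ _)
  rw [hIcc]
  rw [hsum] at hinteq
  rw [hVval, hsub] at hinteq
  linarith
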